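/- Let A be an n×d matrix and let B_1, ..., B_t be matrices satisfying ‖B_jᵀB_j − AᵀA‖_op ≤ ε‖A‖_op² for all j, with ε ≤ c/t for a small enough constant c. Let M = (B_tᵀB_t)⋯(B_1ᵀB_1) and let v_1 be the top right singular vector of A. Then ‖Mᵀv_1‖ ≥ (1 − 2tε − 4t√ε)·σ_1(A)^{2t}. -/

import Mathlib

open Matrix

/-- The eigenvalues of a Hermitian matrix, sorted in decreasing order
(`sortedEigs B hB 0` is the largest eigenvalue). -/
noncomputable def sortedEigs {d : ℕ} (B : Matrix (Fin d) (Fin d) ℝ) (hB : B.IsHermitian)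
    (i : Fin d) : ℝ :=
  (hB.eigenvalues ∘ Tuple.sort hB.eigenvalues) i.rev

/-- The `i`-th largest singular value of a real matrix `A`, i.e. the square root of the
`i`-th largest eigenvalue of `AᵀA`. -/
noncomputable def singVal {n d : ℕ} (A : Matrix (Fin n) (Fin d) ℝ) (i : Fin d) : ℝ :=
  Real.sqrt (sortedEigs (Aᴴ * A) (isHermitian_conjTranspose_mul_self A) i)

/-- The spectral (operator) norm of a real matrix: its largest singular value. -/
noncomputable def opNorm {n d : ℕ} [NeZero d] (A : Matrix (Fin n) (Fin d) ℝ) : ℝ :=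
  singVal A 0

/-- Squared Euclidean norm of a vector. -/
def eNormSq {d : ℕ} (x : Fin d → ℝ) : ℝ := ∑ i, x i ^ 2

/-- Euclidean norm of a vector. -/
noncomputable def eNorm {d : ℕ} (x : Fin d → ℝ) : ℝ := Real.sqrt (eNormSq x)

/-- Squared Frobenius norm of a matrix. -/
def frobSq {n d : ℕ} (M : Matrix (Fin n) (Fin d) ℝ) : ℝ := ∑ i, ∑ j, M i j ^ 2

noncomputable def toE {d : ℕ} (x : Fin d → ℝ) : EuclideanSpace ℝ (Fin d) :=
  (WithLp.equiv 2 _).symm x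

lemma eNormSq_eq {d : ℕ} (x : Fin d → ℝ) : eNormSq x = ‖toE x‖ ^ 2 := by
  rw [EuclideanSpace.norm_eq, Real.sq_sqrt (by positivity)]
  simp [eNormSq, toE, sq_abs]

lemma eNorm_eq {d : ℕ} (x : Fin d → ℝ) : eNorm x = ‖toE x‖ := by
  rw [eNorm, eNormSq_eq, Real.sqrt_sq (norm_nonneg _)]

lemma dot_eq_inner {d : ℕ} (x y : Fin d → ℝ) : x ⬝ᵥ y = inner ℝ (toE x) (toE y) := by
  simp [dotProduct, toE, PiLp.inner_apply, RCLike.inner_apply, mul_comm]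

lemma repr_mulVec {d : ℕ} {M : Matrix (Fin d) (Fin d) ℝ} (hM : M.IsHermitian)
    (x : Fin d → ℝ) (i : Fin d) :
    hM.eigenvectorBasis.repr (toE (M *ᵥ x)) i
      = hM.eigenvalues i * hM.eigenvectorBasis.repr (toE x) i := by
  rw [OrthonormalBasis.repr_apply_apply, OrthonormalBasis.repr_apply_apply]
  have h1 : hM.eigenvectorBasis i = toE ⇑(hM.eigenvectorBasis i) := rfl
  rw [h1, ← dot_eq_inner, ← dot_eq_inner]
  have h2 : Mᵀ = M := by
    have := hM.eq
    ext i j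
    simpa [conjTranspose_apply] using congrFun (congrFun this i) j
  rw [dotProduct_mulVec, ← mulVec_transpose, h2, hM.mulVec_eigenvectorBasis i, smul_dotProduct]
  rfl

lemma dot_self_eq {d : ℕ} (x : Fin d → ℝ) : x ⬝ᵥ x = eNormSq x := by
  simp [dotProduct, eNormSq, sq]

lemma inner_eq_sum_repr {d : ℕ} {M : Matrix (Fin d) (Fin d) ℝ} (hM : M.IsHermitian)
    (x y : EuclideanSpace ℝ (Fin d)) :
    (inner ℝ x y : ℝ) = ∑ i, hM.eigenvectorBasis.repr x i * hM.eigenvectorBasis.repr y i := by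
  rw [← hM.eigenvectorBasis.repr.inner_map_map x y, PiLp.inner_apply]
  simp [RCLike.inner_apply, mul_comm]

lemma rayleigh_le {d : ℕ} {M : Matrix (Fin d) (Fin d) ℝ} (hM : M.IsHermitian) {μ : ℝ}
    (hμ : ∀ i, hM.eigenvalues i ≤ μ) (x : Fin d → ℝ) :
    x ⬝ᵥ (M *ᵥ x) ≤ μ * eNormSq x := by
  have h1 : x ⬝ᵥ (M *ᵥ x) = ∑ i, hM.eigenvalues i * hM.eigenvectorBasis.repr (toE x) i ^ 2 := by
    rw [dot_eq_inner, inner_eq_sum_repr hM]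
    exact Finset.sum_congr rfl fun i _ => by rw [repr_mulVec hM]; ring
  have h2 : eNormSq x = ∑ i, hM.eigenvectorBasis.repr (toE x) i ^ 2 := by
    rw [← dot_self_eq, dot_eq_inner, inner_eq_sum_repr hM]
    exact Finset.sum_congr rfl fun i _ => (sq _).symm
  rw [h1, h2, Finset.mul_sum]
  exact Finset.sum_le_sum fun i _ => mul_le_mul_of_nonneg_right (hμ i) (sq_nonneg _)

lemma mulVec_eNormSq_le {d : ℕ} {M : Matrix (Fin d) (Fin d) ℝ} (hM : M.IsHermitian) {μ : ℝ}
    (h0 : ∀ i, 0 ≤ hM.eigenvalues i) (hμ : ∀ i, hM.eigenvalues i ≤ μ) (x : Fin d → ℝ) :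
    eNormSq (M *ᵥ x) ≤ μ ^ 2 * eNormSq x := by
  have h1 : eNormSq (M *ᵥ x)
      = ∑ i, (hM.eigenvalues i * hM.eigenvectorBasis.repr (toE x) i) ^ 2 := by
    rw [← dot_self_eq, dot_eq_inner, inner_eq_sum_repr hM]
    exact Finset.sum_congr rfl fun i _ => by rw [repr_mulVec hM]; ring
  have h2 : eNormSq x = ∑ i, hM.eigenvectorBasis.repr (toE x) i ^ 2 := by
    rw [← dot_self_eq, dot_eq_inner, inner_eq_sum_repr hM]
    exact Finset.sum_congr rfl fun i _ => (sq _).symm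
  rw [h1, h2, Finset.mul_sum]
  refine Finset.sum_le_sum fun i _ => ?_
  rw [mul_pow]
  exact mul_le_mul_of_nonneg_right (pow_le_pow_left₀ (h0 i) (hμ i) 2) (sq_nonneg _)

lemma eig_le_sortedEigs_zero {d : ℕ} [NeZero d] (M : Matrix (Fin d) (Fin d) ℝ)
    (hM : M.IsHermitian) (i : Fin d) : hM.eigenvalues i ≤ sortedEigs M hM 0 := by
  have h1 : ∀ j : Fin d, (hM.eigenvalues ∘ Tuple.sort hM.eigenvalues) j
      ≤ (hM.eigenvalues ∘ Tuple.sort hM.eigenvalues) (Fin.rev 0) :=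
    fun j => Tuple.monotone_sort hM.eigenvalues (by rw [Fin.rev_zero_eq_top]; exact le_top)
  have h2 := h1 ((Tuple.sort hM.eigenvalues)⁻¹ i)
  simpa [sortedEigs] using h2

lemma sortedEigs_mem {d : ℕ} [NeZero d] (M : Matrix (Fin d) (Fin d) ℝ)
    (hM : M.IsHermitian) (i : Fin d) : ∃ j, sortedEigs M hM i = hM.eigenvalues j :=
  ⟨_, rfl⟩

lemma opNorm_mulVec {n d : ℕ} [NeZero d] (E : Matrix (Fin n) (Fin d) ℝ) (x : Fin d → ℝ) :
    eNorm (E *ᵥ x) ≤ opNorm E * eNorm x := by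
  have key : eNormSq (E *ᵥ x) ≤ sortedEigs (Eᴴ * E) (isHermitian_conjTranspose_mul_self E) 0
      * eNormSq x := by
    have h1 : (E *ᵥ x) ⬝ᵥ (E *ᵥ x) = x ⬝ᵥ ((Eᴴ * E) *ᵥ x) := by
      rw [← mulVec_mulVec, dotProduct_mulVec (E *ᵥ x), conjTranspose_eq_transpose_of_trivial,
        ← mulVec_transpose, dotProduct_comm, dotProduct_mulVec, ← mulVec_transpose]
    rw [← dot_self_eq, h1]
    exact rayleigh_le _ (eig_le_sortedEigs_zero _ _) x
  have hnn : 0 ≤ sortedEigs (Eᴴ * E) (isHermitian_conjTranspose_mul_self E) 0 :=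
    (posSemidef_conjTranspose_mul_self E).eigenvalues_nonneg _
  calc eNorm (E *ᵥ x) = Real.sqrt (eNormSq (E *ᵥ x)) := rfl
    _ ≤ Real.sqrt (sortedEigs (Eᴴ * E) (isHermitian_conjTranspose_mul_self E) 0 * eNormSq x) :=
        Real.sqrt_le_sqrt key
    _ = opNorm E * eNorm x := by
        rw [Real.sqrt_mul hnn]; rfl

lemma gram_mulVec {n d : ℕ} [NeZero d] (A : Matrix (Fin n) (Fin d) ℝ) (x : Fin d → ℝ) :
    eNorm ((Aᴴ * A) *ᵥ x) ≤ singVal A 0 ^ 2 * eNorm x := by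
  set μ := sortedEigs (Aᴴ * A) (isHermitian_conjTranspose_mul_self A) 0 with hμdef
  have hnn : 0 ≤ μ := (posSemidef_conjTranspose_mul_self A).eigenvalues_nonneg _
  have hsq : singVal A 0 ^ 2 = μ := Real.sq_sqrt hnn
  have key : eNormSq ((Aᴴ * A) *ᵥ x) ≤ μ ^ 2 * eNormSq x :=
    mulVec_eNormSq_le (isHermitian_conjTranspose_mul_self A)
      ((posSemidef_conjTranspose_mul_self A).eigenvalues_nonneg)
      (eig_le_sortedEigs_zero _ _) x
  rw [hsq]
  calc eNorm ((Aᴴ * A) *ᵥ x) = Real.sqrt (eNormSq ((Aᴴ * A) *ᵥ x)) := rfl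
    _ ≤ Real.sqrt (μ ^ 2 * eNormSq x) := Real.sqrt_le_sqrt key
    _ = μ * eNorm x := by
        rw [Real.sqrt_mul (sq_nonneg _), Real.sqrt_sq hnn]; rfl

lemma eNorm_nonneg {d : ℕ} (x : Fin d → ℝ) : 0 ≤ eNorm x := Real.sqrt_nonneg _

lemma eNorm_triangle {d : ℕ} (x y : Fin d → ℝ) : eNorm (x + y) ≤ eNorm x + eNorm y := by
  rw [eNorm_eq, eNorm_eq, eNorm_eq]
  have : toE (x + y) = toE x + toE y := by simp [toE]
  rw [this]
  exact norm_add_le _ _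

lemma abs_dot_le {d : ℕ} (x y : Fin d → ℝ) : |x ⬝ᵥ y| ≤ eNorm x * eNorm y := by
  rw [dot_eq_inner, eNorm_eq, eNorm_eq]
  exact abs_real_inner_le_norm _ _

lemma key_induction {d : ℕ} (P : Matrix (Fin d) (Fin d) ℝ) (v : Fin d → ℝ) (s ε : ℝ)
    (hs : 0 ≤ s) (hε : 0 ≤ ε) (hv : eNormSq v = 1) (hPv : P *ᵥ v = s • v) (hPsym : Pᵀ = P)
    (hP : ∀ x, eNorm (P *ᵥ x) ≤ s * eNorm x)
    (L : List (Matrix (Fin d) (Fin d) ℝ))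
    (hL : ∀ C ∈ L, ∀ x, eNorm ((C - P) *ᵥ x) ≤ ε * s * eNorm x)
    (h2 : (1 + ε) ^ L.length ≤ 2) :
    (1 - 2 * L.length * ε) * s ^ L.length ≤ (L.prod *ᵥ v) ⬝ᵥ v ∧
      eNorm (L.prod *ᵥ v) ≤ ((1 + ε) * s) ^ L.length := by
  induction L with
  | nil =>
    constructor
    · simp [dot_self_eq, hv]
    · simp [eNorm, hv]
  | cons C L ih =>
    have hmem : ∀ C' ∈ L, ∀ x, eNorm ((C' - P) *ᵥ x) ≤ ε * s * eNorm x :=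
      fun C' h => hL C' (List.mem_cons_of_mem _ h)
    have h2' : (1 + ε) ^ L.length ≤ 2 :=
      le_trans (pow_le_pow_right₀ (by linarith) (by simp)) h2
    obtain ⟨ih1, ih2⟩ := ih hmem h2'
    set w := L.prod *ᵥ v with hw
    set k := L.length with hk
    have hprod : (C :: L).prod *ᵥ v = C *ᵥ w := by
      rw [List.prod_cons, ← mulVec_mulVec]
    have hsplit : C *ᵥ w = P *ᵥ w + (C - P) *ᵥ w := by
      rw [sub_mulVec]; ring_nf
    have hCw : eNorm (C *ᵥ w) ≤ (1 + ε) * s * eNorm w := by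
      rw [hsplit]
      calc eNorm (P *ᵥ w + (C - P) *ᵥ w) ≤ eNorm (P *ᵥ w) + eNorm ((C - P) *ᵥ w) :=
            eNorm_triangle _ _
        _ ≤ s * eNorm w + ε * s * eNorm w := add_le_add (hP w) (hL C List.mem_cons_self w)
        _ = (1 + ε) * s * eNorm w := by ring
    have hnormw : eNorm w ≤ ((1 + ε) * s) ^ k := ih2
    constructor
    · -- inner product bound
      have hPwv : (P *ᵥ w) ⬝ᵥ v = s * (w ⬝ᵥ v) := by
        rw [dotProduct_comm, dotProduct_mulVec, ← mulVec_transpose, hPsym, hPv,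
          smul_dotProduct, dotProduct_comm, smul_eq_mul]
      have herr : |((C - P) *ᵥ w) ⬝ᵥ v| ≤ ε * s * eNorm w * 1 := by
        calc |((C - P) *ᵥ w) ⬝ᵥ v| ≤ eNorm ((C - P) *ᵥ w) * eNorm v := abs_dot_le _ _
          _ ≤ ε * s * eNorm w * 1 := by
              have hv1 : eNorm v = 1 := by rw [eNorm, hv]; exact Real.sqrt_one
              rw [hv1]
              exact mul_le_mul_of_nonneg_right (hL C List.mem_cons_self w) zero_le_one
      have hwnorm_le2 : eNorm w ≤ 2 * s ^ k := by
        calc eNorm w ≤ ((1 + ε) * s) ^ k := hnormw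
          _ = (1 + ε) ^ k * s ^ k := mul_pow _ _ _
          _ ≤ 2 * s ^ k := mul_le_mul_of_nonneg_right h2' (pow_nonneg hs k)
      have : ((C :: L).prod *ᵥ v) ⬝ᵥ v = (P *ᵥ w) ⬝ᵥ v + ((C - P) *ᵥ w) ⬝ᵥ v := by
        rw [hprod, hsplit, add_dotProduct]
      rw [this, hPwv]
      have hlen : ((C :: L).length : ℝ) = (k : ℝ) + 1 := by simp [hk]
      rw [List.length_cons]
      push_cast
      have h3 : s * (w ⬝ᵥ v) ≥ s * ((1 - 2 * k * ε) * s ^ k) :=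
        mul_le_mul_of_nonneg_left ih1 hs
      have h4 : ((C - P) *ᵥ w) ⬝ᵥ v ≥ -(ε * s * (2 * s ^ k)) := by
        have := (abs_le.mp herr).1
        have h5 : ε * s * eNorm w ≤ ε * s * (2 * s ^ k) :=
          mul_le_mul_of_nonneg_left hwnorm_le2 (by positivity)
        linarith
      calc (1 - 2 * ((k : ℝ) + 1) * ε) * s ^ (k + 1)
          = s * ((1 - 2 * k * ε) * s ^ k) - ε * s * (2 * s ^ k) := by ring
        _ ≤ s * (w ⬝ᵥ v) + ((C - P) *ᵥ w) ⬝ᵥ v := by linarith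
    · -- norm bound
      rw [hprod, List.length_cons]
      calc eNorm (C *ᵥ w) ≤ (1 + ε) * s * eNorm w := hCw
        _ ≤ (1 + ε) * s * ((1 + ε) * s) ^ k :=
            mul_le_mul_of_nonneg_left hnormw (by positivity)
        _ = ((1 + ε) * s) ^ (k + 1) := (pow_succ' _ _).symm

/-- There is a small enough constant `c > 0` such that the following holds.
If `‖B_jᵀB_j − AᵀA‖_op ≤ ε‖A‖_op²` for all `j`, with `0 ≤ ε ≤ c/t`, and
`M = (B_tᵀB_t)⋯(B_1ᵀB_1)`, then `‖Mᵀv₁‖ ≥ (1 − 2tε − 4t√ε)·σ₁(A)^{2t}` where `v₁` is the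
top right singular vector of `A`. -/
theorem stmt8 :
    ∃ c : ℝ, 0 < c ∧
      ∀ (n d t : ℕ) (_ : NeZero d) (m : Fin t → ℕ)
        (A : Matrix (Fin n) (Fin d) ℝ)
        (B : (j : Fin t) → Matrix (Fin (m j)) (Fin d) ℝ)
        (v1 : Fin d → ℝ), eNormSq v1 = 1 →
        (Aᴴ * A).mulVec v1 = ((singVal A 0) ^ 2) • v1 →
        ∀ ε : ℝ, 0 ≤ ε → ε ≤ c / t →
        (∀ j, opNorm ((B j)ᴴ * B j - Aᴴ * A) ≤ ε * (opNorm A) ^ 2) →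
        (1 - 2 * t * ε - 4 * t * Real.sqrt ε) * (singVal A 0) ^ (2 * t) ≤
          eNorm (((List.ofFn fun j => (B j)ᴴ * B j).reverse.prod)ᴴ.mulVec v1) := by
  refine ⟨1/2, by norm_num, ?_⟩
  intro n d t inst m A B v1 hv hPv ε hε hεc hB
  haveI := inst
  set L : List (Matrix (Fin d) (Fin d) ℝ) := List.ofFn fun j => (B j)ᴴ * B j with hLdef
  set s : ℝ := singVal A 0 ^ 2 with hsdef
  have hs : 0 ≤ s := sq_nonneg _
  -- the transpose of the reversed product is the product in order
  have hherm : ∀ C ∈ L, Cᵀ = C := by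
    rw [hLdef]
    rw [List.forall_mem_ofFn_iff]
    intro j
    rw [← conjTranspose_eq_transpose_of_trivial]
    exact (isHermitian_conjTranspose_mul_self (B j)).eq
  have hM : (L.reverse.prod)ᴴ = L.prod := by
    rw [conjTranspose_eq_transpose_of_trivial, transpose_list_prod]
    congr 1
    rw [List.map_reverse, List.reverse_reverse]
    exact (List.map_congr_left (fun C hC => hherm C hC)).trans (List.map_id L)
  rw [show (((List.ofFn fun j => (B j)ᴴ * B j).reverse.prod)ᴴ).mulVec v1 = L.prod *ᵥ v1 by
    rw [← hLdef, hM]]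
  have hlen : L.length = t := by rw [hLdef]; exact List.length_ofFn
  -- hypotheses of key_induction
  have hPsym : (Aᴴ * A)ᵀ = Aᴴ * A := by
    rw [← conjTranspose_eq_transpose_of_trivial]
    exact (isHermitian_conjTranspose_mul_self A).eq
  have hL : ∀ C ∈ L, ∀ x, eNorm ((C - Aᴴ * A) *ᵥ x) ≤ ε * s * eNorm x := by
    rw [hLdef, List.forall_mem_ofFn_iff]
    intro j x
    calc eNorm (((B j)ᴴ * B j - Aᴴ * A) *ᵥ x)
        ≤ opNorm ((B j)ᴴ * B j - Aᴴ * A) * eNorm x := opNorm_mulVec _ _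
      _ ≤ ε * s * eNorm x := by
          apply mul_le_mul_of_nonneg_right _ (eNorm_nonneg _)
          exact hB j
  have h2 : (1 + ε) ^ L.length ≤ 2 := by
    rw [hlen]
    rcases Nat.eq_zero_or_pos t with ht | ht
    · subst ht; simp
    · have htpos : (0 : ℝ) < t := by exact_mod_cast ht
      have htε : (t : ℝ) * ε ≤ 1/2 := by
        rw [mul_comm, ← le_div_iff₀ htpos]
        exact hεc
      have ht1 : (1 : ℝ) ≤ t := by exact_mod_cast ht
      have hε1 : ε ≤ 1 := by nlinarith
      have hY : (1 : ℝ)/2 ≤ (1 - ε) ^ t := by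
        have := one_add_mul_le_pow (a := -ε) (by linarith) t
        have h' : 1 + (t : ℝ) * (-ε) = 1 - t * ε := by ring
        calc (1 : ℝ)/2 ≤ 1 - t * ε := by linarith
          _ = 1 + (t : ℝ) * (-ε) := by ring
          _ ≤ (1 + -ε) ^ t := this
          _ = (1 - ε) ^ t := by ring_nf
      have hXY : (1 + ε) ^ t * (1 - ε) ^ t ≤ 1 := by
        rw [← mul_pow]
        apply pow_le_one₀ (by nlinarith) (by nlinarith)
      have hX0 : (0 : ℝ) ≤ (1 + ε) ^ t := by positivity
      nlinarith [mul_le_mul_of_nonneg_left hY hX0]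
  obtain ⟨ineq1, _⟩ := key_induction (Aᴴ * A) v1 s ε hs hε hv hPv hPsym
    (gram_mulVec A) L hL h2
  rw [hlen] at ineq1
  have hCS : (L.prod *ᵥ v1) ⬝ᵥ v1 ≤ eNorm (L.prod *ᵥ v1) := by
    have hv1 : eNorm v1 = 1 := by rw [eNorm, hv]; exact Real.sqrt_one
    have := abs_dot_le (L.prod *ᵥ v1) v1
    rw [hv1, mul_one] at this
    exact le_trans (le_abs_self _) this
  have hpow : singVal A 0 ^ (2 * t) = s ^ t := by
    rw [hsdef, ← pow_mul]
  rw [hpow]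
  have hextra : 0 ≤ 4 * (t : ℝ) * Real.sqrt ε * s ^ t := by positivity
  calc (1 - 2 * t * ε - 4 * t * Real.sqrt ε) * s ^ t
      ≤ (1 - 2 * t * ε) * s ^ t := by nlinarith [pow_nonneg hs t]
    _ ≤ (L.prod *ᵥ v1) ⬝ᵥ v1 := ineq1
    _ ≤ eNorm (L.prod *ᵥ v1) := hCS
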